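/- arXiv:2008.09660 — 3 statements merged into one kernel-verified Lean document; each statement's English description precedes it below -/
import Mathlib

section
/- Let G be a finite simple graph with maximum degree at most 3, and let S ⊆ V(G) with |S| ≤ k be such that every vertex of G − S has degree at most 1 in G − S. Then the number of vertices of G with degree exactly 3 is at most 2.5·k (equivalently, at most ⌊5k/2⌋). -/
open Set

/-- Degree of `v` in the induced subgraph `G − S`. -/
noncomputable def degOut {V : Type*} [Fintype V] (G : SimpleGraph V) (S : Set V) (v : V) : ℕ :=
  {w | w ∉ S ∧ G.Adj v w}.ncard

theorem stmt1 {V : Type*} [Fintype V] [DecidableEq V] (G : SimpleGraph V)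
    (hdeg : ∀ v, (G.neighborSet v).ncard ≤ 3)
    (S : Set V) (k : ℕ) (hSk : S.ncard ≤ k)
    (hsol : ∀ v, v ∉ S → degOut G S v ≤ 1) :
    2 * {v | (G.neighborSet v).ncard = 3}.ncard ≤ 5 * k := by
  classical
  set Sf : Finset V := S.toFinite.toFinset with hSf
  have hSfmem : ∀ v, v ∈ Sf ↔ v ∈ S := fun v => S.toFinite.mem_toFinset
  have hScard : Sf.card = S.ncard := (Set.ncard_eq_toFinset_card S S.toFinite).symm
  set Tf : Finset V := Finset.univ.filter (fun v => (G.neighborSet v).ncard = 3) with hTf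
  set Af : Finset V := Tf \ Sf with hAf
  -- each vertex of Af has ≥ 2 neighbors in S
  have key1 : ∀ v ∈ Af, 2 ≤ (Sf.filter (G.Adj v)).card := by
    intro v hv
    rw [Finset.mem_sdiff, hTf, Finset.mem_filter] at hv
    obtain ⟨⟨-, hd3⟩, hvS⟩ := hv
    rw [hSfmem] at hvS
    have hsplit : G.neighborSet v = {w | w ∈ S ∧ G.Adj v w} ∪ {w | w ∉ S ∧ G.Adj v w} := by
      ext w; by_cases hw : w ∈ S <;> simp [SimpleGraph.mem_neighborSet, hw]
    have hdisj : Disjoint {w | w ∈ S ∧ G.Adj v w} {w | w ∉ S ∧ G.Adj v w} := by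
      rw [Set.disjoint_left]; rintro w ⟨h1, -⟩ ⟨h2, -⟩; exact h2 h1
    have hcard : ({w | w ∈ S ∧ G.Adj v w}).ncard + ({w | w ∉ S ∧ G.Adj v w}).ncard = 3 := by
      rw [← Set.ncard_union_eq hdisj (Set.toFinite _) (Set.toFinite _), ← hsplit, hd3]
    have hout : ({w | w ∉ S ∧ G.Adj v w}).ncard ≤ 1 := hsol v hvS
    have hin : 2 ≤ ({w | w ∈ S ∧ G.Adj v w}).ncard := by omega
    have : (Sf.filter (G.Adj v)).card = ({w | w ∈ S ∧ G.Adj v w}).ncard := by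
      rw [Set.ncard_eq_toFinset_card']
      congr 1
      ext w
      simp [hSfmem, Set.mem_toFinset]
    omega
  -- double counting
  have swap : ∑ v ∈ Af, (Sf.filter (G.Adj v)).card
      = ∑ s ∈ Sf, (Af.filter (G.Adj s)).card := by
    simp_rw [Finset.card_filter]
    rw [Finset.sum_comm]
    refine Finset.sum_congr rfl fun s _ => Finset.sum_congr rfl fun v _ => ?_
    simp [G.adj_comm]
  have h1 : 2 * Af.card ≤ ∑ v ∈ Af, (Sf.filter (G.Adj v)).card := by
    calc 2 * Af.card = Af.card * 2 := by ring
    _ ≤ _ := Finset.card_nsmul_le_sum Af _ 2 key1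
  have h2 : ∑ s ∈ Sf, (Af.filter (G.Adj s)).card ≤ 3 * Sf.card := by
    calc ∑ s ∈ Sf, (Af.filter (G.Adj s)).card ≤ Sf.card * 3 := by
          refine Finset.sum_le_card_nsmul Sf _ 3 fun s _ => ?_
          have : (Af.filter (G.Adj s)).card ≤ (Finset.univ.filter (G.Adj s)).card :=
            Finset.card_le_card (by intro w hw; simp_all [Finset.mem_filter])
          have hdeg3 : (Finset.univ.filter (G.Adj s)).card = (G.neighborSet s).ncard := by
            rw [Set.ncard_eq_toFinset_card']
            congr 1; ext w; simp [SimpleGraph.mem_neighborSet]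
          have := hdeg s
          omega
      _ = 3 * Sf.card := by ring
  have hA : 2 * Af.card ≤ 3 * k := by
    have := swap ▸ h1
    have hk : Sf.card ≤ k := by omega
    omega
  have hTcard : {v | (G.neighborSet v).ncard = 3}.ncard = Tf.card := by
    rw [Set.ncard_eq_toFinset_card']
    congr 1; ext v; simp [hTf]
  have hTsplit : Tf.card ≤ Af.card + Sf.card := by
    have h := Finset.card_sdiff_add_card_inter Tf Sf
    rw [← hAf] at h
    have := Finset.card_le_card (Finset.inter_subset_right (s₁ := Tf) (s₂ := Sf))
    omega
  have hk : Sf.card ≤ k := by omega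
  omega
end

section
/- Let G be a graph with a vertex u of degree d ≥ 4 such that for every neighbor v of u, the set N(v) \ N[u] is nonempty. Suppose S ⊆ V(G) is a set with u ∉ S such that every vertex of G − S has degree exactly 1 in G − S. Then there exists exactly one neighbor v of u with v ∉ S, and for this v the set (N(u) ∪ N(v)) \ {u, v} is contained in S; moreover |(N(u) ∪ N(v)) \ {u, v}| ≥ d. -/
open Set

theorem stmt4 {V : Type*} [Fintype V] [DecidableEq V] (G : SimpleGraph V)
    (u : V) (d : ℕ) (hd : 4 ≤ d) (hdegu : (G.neighborSet u).ncard = d)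
    (hnb : ∀ v ∈ G.neighborSet u, (G.neighborSet v \ (insert u (G.neighborSet u))).Nonempty)
    (S : Set V) (huS : u ∉ S)
    (hsol : ∀ w, w ∉ S → degOut G S w = 1) :
    (∃! v, v ∈ G.neighborSet u ∧ v ∉ S) ∧
      ∀ v ∈ G.neighborSet u, v ∉ S →
        (G.neighborSet u ∪ G.neighborSet v) \ {u, v} ⊆ S ∧
        d ≤ ((G.neighborSet u ∪ G.neighborSet v) \ {u, v}).ncard := by
  have hu := hsol u huS
  unfold degOut at hu
  obtain ⟨v₀, hv₀⟩ := Set.ncard_eq_one.mp hu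
  have hv₀mem : v₀ ∉ S ∧ G.Adj u v₀ := by
    have : v₀ ∈ ({v₀} : Set V) := rfl
    rw [← hv₀] at this; exact this
  constructor
  · refine ⟨v₀, ⟨hv₀mem.2, hv₀mem.1⟩, ?_⟩
    rintro y ⟨hy1, hy2⟩
    have : y ∈ {w | w ∉ S ∧ G.Adj u w} := ⟨hy2, hy1⟩
    rw [hv₀] at this; exact this
  · intro v hv hvS
    have hvadj : G.Adj u v := hv
    -- v must equal v₀
    have hvv₀ : v = v₀ := by
      have : v ∈ {w | w ∉ S ∧ G.Adj u w} := ⟨hvS, hvadj⟩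
      rw [hv₀] at this; exact this
    have hvdeg := hsol v hvS
    unfold degOut at hvdeg
    obtain ⟨w₀, hw₀⟩ := Set.ncard_eq_one.mp hvdeg
    have huw₀ : u = w₀ := by
      have : u ∈ {w | w ∉ S ∧ G.Adj v w} := ⟨huS, hvadj.symm⟩
      rw [hw₀] at this; exact this
    have hsub : (G.neighborSet u ∪ G.neighborSet v) \ {u, v} ⊆ S := by
      rintro x ⟨hx, hxuv⟩
      by_contra hxS
      have hxu : x ≠ u := fun h => hxuv (by simp [h])
      have hxv : x ≠ v := fun h => hxuv (by simp [h])
      rcases hx with hx | hx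
      · have : x ∈ {w | w ∉ S ∧ G.Adj u w} := ⟨hxS, hx⟩
        rw [hv₀] at this
        exact hxv (this.trans hvv₀.symm)
      · have : x ∈ {w | w ∉ S ∧ G.Adj v w} := ⟨hxS, hx⟩
        rw [hw₀] at this
        exact hxu (this.trans huw₀.symm)
    refine ⟨hsub, ?_⟩
    obtain ⟨y, hy1, hy2⟩ := hnb v hv
    have hyu : y ≠ u := fun h => hy2 (by simp [h])
    have hyNu : y ∉ G.neighborSet u := fun h => hy2 (by simp [h])
    have hyv : y ≠ v := fun h => (G.irrefl (h ▸ hy1))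
    set A : Set V := insert y (G.neighborSet u \ {v}) with hA
    have hAsub : A ⊆ (G.neighborSet u ∪ G.neighborSet v) \ {u, v} := by
      rintro x (rfl | ⟨hx1, hx2⟩)
      · exact ⟨Or.inr hy1, by simp [hyu, hyv]⟩
      · have hxu : x ≠ u := fun h => G.irrefl (h ▸ hx1)
        exact ⟨Or.inl hx1, by simp [hxu, Set.mem_singleton_iff.not.mp hx2]⟩
    have hcard : A.ncard = d := by
      rw [hA, Set.ncard_insert_of_notMem (fun h => hyNu h.1) (Set.toFinite _),
        Set.ncard_diff_singleton_of_mem hv, hdegu]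
      omega
    calc d = A.ncard := hcard.symm
      _ ≤ _ := Set.ncard_le_ncard hAsub (Set.toFinite _)
end

section
/- Let G be a finite simple graph and S ⊆ V(G) such that every vertex of G − S has degree at most 1 in G − S. Suppose u ∉ S, v ∈ S, N[v] \ {u} ⊆ N(u), and there exists w ∈ N(u) ∩ N(v) with w ∉ S. Then S' := (S \ {v}) ∪ {u} also satisfies that every vertex of G − S' has degree at most 1 in G − S', and |S'| ≤ |S|. -/
open Set

theorem stmt10 {V : Type*} [Fintype V] [DecidableEq V] (G : SimpleGraph V)
    (S : Set V) (hsol : ∀ x, x ∉ S → degOut G S x ≤ 1)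
    (u v : V) (huS : u ∉ S) (hvS : v ∈ S)
    (hsub : (insert v (G.neighborSet v)) \ {u} ⊆ G.neighborSet u)
    (w : V) (hw : w ∈ G.neighborSet u ∩ G.neighborSet v) (hwS : w ∉ S) :
    (∀ x, x ∉ (S \ {v}) ∪ {u} → degOut G ((S \ {v}) ∪ {u}) x ≤ 1) ∧
      ((S \ {v}) ∪ {u}).ncard ≤ S.ncard := by
  have hvu : v ≠ u := fun h => huS (h ▸ hvS)
  have huv : G.Adj u v := hsub ⟨mem_insert _ _, hvu⟩
  have hwu : G.Adj u w := hw.1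
  have hwv : G.Adj v w := hw.2
  -- w is the unique neighbor of u outside S
  have huniq : ∀ y, y ∉ S → G.Adj u y → y = w := by
    intro y hyS hadj
    have h1 : degOut G S u ≤ 1 := hsol u huS
    have hfin : ({z | z ∉ S ∧ G.Adj u z} : Set V).Finite := Set.toFinite _
    have := (Set.ncard_le_one hfin).mp h1
    exact this y (by exact ⟨hyS, hadj⟩) w (by exact ⟨hwS, hwu⟩)
  -- u is the unique neighbor of w outside S
  have huniqw : ∀ y, y ∉ S → G.Adj w y → y = u := by
    intro y hyS hadj
    have h1 : degOut G S w ≤ 1 := hsol w hwS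
    have hfin : ({z | z ∉ S ∧ G.Adj w z} : Set V).Finite := Set.toFinite _
    have := (Set.ncard_le_one hfin).mp h1
    exact this y (by exact ⟨hyS, hadj⟩) u (by exact ⟨huS, hwu.symm⟩)
  constructor
  · intro x hx
    have hxu : x ≠ u := fun h => hx (Or.inr (by simp [h]))
    by_cases hxv : x = v
    · -- neighbors of v outside S' are contained in {w}
      have hsubw : {z | z ∉ (S \ {v}) ∪ {u} ∧ G.Adj x z} ⊆ ({w} : Set V) := by
        intro y hy
        obtain ⟨hyS', hadj⟩ := hy
        rw [hxv] at hadj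
        have hyu : y ≠ u := fun h => hyS' (Or.inr (by simp [h]))
        have hyv : y ≠ v := fun h => G.loopless.irrefl v (h ▸ hadj)
        have hyS : y ∉ S := fun h => hyS' (Or.inl ⟨h, hyv⟩)
        have : G.Adj u y := hsub ⟨Or.inr hadj, hyu⟩
        exact huniq y hyS this
      calc degOut G ((S \ {v}) ∪ {u}) x ≤ ({w} : Set V).ncard :=
            Set.ncard_le_ncard hsubw (Set.toFinite _)
        _ = 1 := Set.ncard_singleton w
    · have hxS : x ∉ S := fun h => hx (Or.inl ⟨h, hxv⟩)
      by_cases hxw : x = w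
      · subst hxw
        have hsubv : {z | z ∉ (S \ {v}) ∪ {u} ∧ G.Adj x z} ⊆ ({v} : Set V) := by
          intro y ⟨hyS', hadj⟩
          have hyu : y ≠ u := fun h => hyS' (Or.inr (by simp [h]))
          by_cases hyv : y = v
          · exact hyv
          · have hyS : y ∉ S := fun h => hyS' (Or.inl ⟨h, hyv⟩)
            exact absurd (huniqw y hyS hadj) hyu
        calc degOut G ((S \ {v}) ∪ {u}) x ≤ ({v} : Set V).ncard :=
              Set.ncard_le_ncard hsubv (Set.toFinite _)
          _ = 1 := Set.ncard_singleton v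
      · have hsub2 : {z | z ∉ (S \ {v}) ∪ {u} ∧ G.Adj x z} ⊆ {z | z ∉ S ∧ G.Adj x z} := by
          intro y ⟨hyS', hadj⟩
          have hyu : y ≠ u := fun h => hyS' (Or.inr (by simp [h]))
          have hyv : y ≠ v := by
            intro h
            subst h
            have : G.Adj u x := hsub ⟨Or.inr hadj.symm, hxu⟩
            exact hxw (huniq x hxS this)
          exact ⟨fun h => hyS' (Or.inl ⟨h, hyv⟩), hadj⟩
        calc degOut G ((S \ {v}) ∪ {u}) x ≤ degOut G S x :=
              Set.ncard_le_ncard hsub2 (Set.toFinite _)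
          _ ≤ 1 := hsol x hxS
  · have h1 : ((S \ {v}) ∪ {u}) = insert u (S \ {v}) := by
      ext y; simp [or_comm]
    rw [h1, Set.ncard_insert_of_notMem (by simp [huS]) (Set.toFinite _)]
    rw [Set.ncard_diff_singleton_of_mem hvS]
    have : 0 < S.ncard := (Set.ncard_pos (Set.toFinite _)).mpr ⟨v, hvS⟩
    omega
end
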